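/- Let N be an ℕ-valued random variable with 0 < E[N] < ∞, let T_1,T_2,… be 𝒯-valued random elements (with arbitrary joint distribution together with N), and let X_1,X_2,… be i.i.d. 𝒳-valued random elements with law ν, with the family (X_i)_{i≥1} independent of (N,(T_i)_{i≥1}). Assume ν is a Borel probability measure on 𝒳 with ν({0}) = 0 that is regularly varying with scaling sequence (a_n) and limit measure μ. Then for every bounded continuous f : 𝒯×𝒳 → [0,∞) for which there exists r > 0 with f(t,x) = 0 whenever d(0,x) < r, one has n·E[1 − exp(−Σ_{i=1}^{N} f(T_i, a_n⁻¹•X_i))] → E[Σ_{i=1}^{N} ∫_𝒳 (1 − e^{−f(T_i,x)}) μ(dx)] as n → ∞. -/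

import Mathlib

/-!
Conditioning on `N = m` reduces the claim to a fixed number `m` of points. Write
`h_n(t, x) = 1 - exp (-f (t, a_n⁻¹ • x))`. The Bonferroni inequalities
`∑ hᵢ - ∑_{j < i} hⱼ hᵢ ≤ 1 - ∏ (1 - hᵢ) ≤ ∑ hᵢ` sandwich the Laplace functional. Since the
mark `Xᵢ` is independent of `(N, Tᵢ)`, `n E[hᵢ; N = m] = E[n ∫ h_n(Tᵢ, x) ν(dx); N = m]`, which
converges to `E[∫ (1 - exp (-f (Tᵢ, x))) μ(dx); N = m]` by regular variation and dominated
convergence. The correction terms are `O(n q_n²)`, where `q_n = ∫ ψ(a_n⁻¹ • x) ν(dx)` for a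
continuous cutoff `ψ ≥ 1 - exp (-f)` vanishing near `0`; regular variation gives `n q_n = O(1)`,
so they vanish in the limit. Finally `n E[1 - exp (-∑ ...); N = m] ≤ K m P(N = m)`, which is
summable because `E N < ∞`, so the limit passes through the sum over `m`.
-/

open MeasureTheory Filter Metric Topology Finset

theorem one_sub_prod_one_sub_le_sum {h : ℕ → ℝ} (h0 : ∀ i, 0 ≤ h i) (h1 : ∀ i, h i ≤ 1)
    (m : ℕ) : 1 - ∏ i ∈ range m, (1 - h i) ≤ ∑ i ∈ range m, h i := by
  induction m with
  | zero => simp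
  | succ m ih =>
    have hp : ∏ i ∈ range m, (1 - h i) ≤ 1 :=
      prod_le_one (fun i _ => by linarith [h1 i]) fun i _ => by linarith [h0 i]
    rw [prod_range_succ, sum_range_succ]
    nlinarith [h0 m]

theorem sum_sub_sum_mul_le_one_sub_prod_one_sub {h : ℕ → ℝ} (h0 : ∀ i, 0 ≤ h i)
    (h1 : ∀ i, h i ≤ 1) (m : ℕ) :
    ∑ i ∈ range m, h i - ∑ i ∈ range m, ∑ j ∈ range i, h j * h i
      ≤ 1 - ∏ i ∈ range m, (1 - h i) := by
  induction m with
  | zero => simp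
  | succ m ih =>
    have hup := one_sub_prod_one_sub_le_sum h0 h1 m
    rw [prod_range_succ, sum_range_succ, sum_range_succ, ← sum_mul]
    nlinarith [h0 m]

theorem one_sub_prod_one_sub_mem_Icc {h : ℕ → ℝ} (h01 : ∀ i, h i ∈ Set.Icc 0 1) (s : Finset ℕ) :
    1 - ∏ i ∈ s, (1 - h i) ∈ Set.Icc 0 1 :=
  ⟨sub_nonneg.2 (prod_le_one (fun i _ => sub_nonneg.2 (h01 i).2)
      fun i _ => sub_le_self _ (h01 i).1),
    sub_le_self _ (prod_nonneg fun i _ => sub_nonneg.2 (h01 i).2)⟩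

theorem tendsto_zero_of_mul_le {q : ℕ → ℝ} {K : ℝ} (hq0 : ∀ n, 0 ≤ q n)
    (hK : ∀ n : ℕ, n * q n ≤ K) :
    Tendsto q atTop (𝓝 0) := by
  refine squeeze_zero' (.of_forall hq0) ?_ (tendsto_const_div_atTop_nhds_zero_nat K)
  filter_upwards [eventually_gt_atTop 0] with n hn
  rw [le_div_iff₀ (by exact_mod_cast hn), mul_comm]
  exact hK n

section Laws

variable {Ω β γ : Type*} [MeasurableSpace Ω] [MeasurableSpace β] [MeasurableSpace γ]
  {Q : Measure Ω} {ν : Measure γ} [IsFiniteMeasure ν]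
  {Y : Ω → β} {Z : Ω → γ}

theorem map_prodMk_eq_prod_of_measure_inter [IsFiniteMeasure Q] (hY : Measurable Y)
    (hZ : Measurable Z)
    (h : ∀ A B, MeasurableSet A → MeasurableSet B → Q (Y ⁻¹' A ∩ Z ⁻¹' B) = Q (Y ⁻¹' A) * ν B) :
    Q.map (fun ω => (Y ω, Z ω)) = (Q.map Y).prod ν := by
  refine (Measure.prod_eq fun A B hA hB => ?_).symm
  rw [Measure.map_apply (hY.prodMk hZ) (hA.prod hB), Measure.map_apply hY hA,
    Set.mk_preimage_prod, h A B hA hB]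

theorem map_eq_smul_of_map_prodMk_eq_prod (hY : Measurable Y) (hZ : Measurable Z)
    (hYZ : Q.map (fun ω => (Y ω, Z ω)) = (Q.map Y).prod ν) : Q.map Z = Q Set.univ • ν := by
  have hZ' : Z = Prod.snd ∘ fun ω => (Y ω, Z ω) := rfl
  rw [hZ', ← Measure.map_map measurable_snd (hY.prodMk hZ), hYZ, Measure.map_snd_prod,
    Measure.map_apply hY MeasurableSet.univ, Set.preimage_univ]

theorem integral_comp_prodMk_of_map_eq_prod [IsFiniteMeasure Q] (hY : Measurable Y)
    (hZ : Measurable Z)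
    (hYZ : Q.map (fun ω => (Y ω, Z ω)) = (Q.map Y).prod ν) {F : β × γ → ℝ} (hF : Measurable F)
    {C : ℝ} (hFC : ∀ z, |F z| ≤ C) :
    ∫ ω, F (Y ω, Z ω) ∂Q = ∫ ω, ∫ z, F (Y ω, z) ∂ν ∂Q := by
  have hFi : Integrable F ((Q.map Y).prod ν) :=
    .of_bound hF.aestronglyMeasurable C (.of_forall hFC)
  rw [← integral_map (hY.prodMk hZ).aemeasurable hF.aestronglyMeasurable, hYZ,
    integral_prod F hFi, integral_map hY.aemeasurable
      (hF.stronglyMeasurable.integral_prod_right').aestronglyMeasurable]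

theorem integral_comp_mul_comp_eq [IsFiniteMeasure Q] {W : Ω → γ} (hW : Measurable W)
    (hZ : Measurable Z) (hW_law : Q.map W = Q Set.univ • ν)
    (hWZ : Q.map (fun ω => (W ω, Z ω)) = (Q.map W).prod ν) {φ : γ → ℝ} (hφm : Measurable φ)
    (hφ : ∀ x, φ x ∈ Set.Icc 0 1) :
    ∫ ω, φ (W ω) * φ (Z ω) ∂Q = Q.real Set.univ * (∫ x, φ x ∂ν) ^ 2 := by
  have hφφ : ∀ z : γ × γ, |φ z.1 * φ z.2| ≤ 1 := fun z => by
    rw [abs_mul]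
    exact mul_le_one₀ (abs_le.2 ⟨by linarith [(hφ z.1).1], (hφ z.1).2⟩) (abs_nonneg _)
      (abs_le.2 ⟨by linarith [(hφ z.2).1], (hφ z.2).2⟩)
  rw [integral_comp_prodMk_of_map_eq_prod hW hZ hWZ (F := fun z => φ z.1 * φ z.2) (by fun_prop)
    hφφ]
  simp_rw [integral_const_mul]
  rw [integral_mul_const, ← integral_map hW.aemeasurable hφm.aestronglyMeasurable, hW_law,
    integral_smul_measure, smul_eq_mul, Measure.real]
  ring

end Laws

section FixedNumberOfPoints

variable {Ω T X : Type*} [MeasurableSpace Ω] [MeasurableSpace T] [MeasurableSpace X]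
  {Q : Measure Ω} [IsFiniteMeasure Q] {ν : Measure X} [IsFiniteMeasure ν]
  {Tt : ℕ → Ω → T} {Xx : ℕ → Ω → X} {h : ℕ → T × X → ℝ} {φ : ℕ → X → ℝ} {K : ℝ} {i j n : ℕ}

theorem mul_integral_section_le (hh : ∀ n, Measurable (h n))
    (hφm : ∀ n, Measurable (φ n)) (hh0 : ∀ n z, 0 ≤ h n z) (hhφ : ∀ n t x, h n (t, x) ≤ φ n x)
    (hφ : ∀ n x, φ n x ∈ Set.Icc 0 1) (hK : ∀ n : ℕ, n * ∫ x, φ n x ∂ν ≤ K) (n : ℕ) (t : T) :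
    n * ∫ x, h n (t, x) ∂ν ≤ K := by
  refine le_trans (mul_le_mul_of_nonneg_left (integral_mono ?_ ?_ (hhφ n t)) n.cast_nonneg) (hK n)
  · exact .of_mem_Icc 0 1 ((hh n).comp measurable_prodMk_left).aemeasurable
      (.of_forall fun x => ⟨hh0 n _, (hhφ n t x).trans (hφ n x).2⟩)
  · exact .of_mem_Icc 0 1 (hφm n).aemeasurable (.of_forall (hφ n))

theorem mul_integral_comp_eq (hT : Measurable (Tt i)) (hX : Measurable (Xx i))
    (hTX : Q.map (fun ω => (Tt i ω, Xx i ω)) = (Q.map (Tt i)).prod ν)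
    (hh : Measurable (h n)) (hh01 : ∀ z, h n z ∈ Set.Icc 0 1) :
    n * ∫ ω, h n (Tt i ω, Xx i ω) ∂Q = ∫ ω, n * ∫ x, h n (Tt i ω, x) ∂ν ∂Q := by
  rw [integral_comp_prodMk_of_map_eq_prod hT hX hTX hh (C := 1)
    fun z => abs_le.2 ⟨by linarith [(hh01 z).1], (hh01 z).2⟩, integral_const_mul]

theorem tendsto_mul_integral_comp (hT : Measurable (Tt i)) (hX : Measurable (Xx i))
    (hTX : Q.map (fun ω => (Tt i ω, Xx i ω)) = (Q.map (Tt i)).prod ν)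
    (hh : ∀ n, Measurable (h n)) (hh01 : ∀ n z, h n z ∈ Set.Icc 0 1)
    (hhK : ∀ (n : ℕ) t, n * ∫ x, h n (t, x) ∂ν ≤ K) {G : T → ℝ}
    (hG : ∀ t, Tendsto (fun n : ℕ => n * ∫ x, h n (t, x) ∂ν) atTop (𝓝 (G t))) :
    Tendsto (fun n : ℕ => n * ∫ ω, h n (Tt i ω, Xx i ω) ∂Q) atTop (𝓝 (∫ ω, G (Tt i ω) ∂Q)) := by
  simp_rw [mul_integral_comp_eq hT hX hTX (hh _) (hh01 _)]
  refine tendsto_integral_of_dominated_convergence (fun _ => K)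
    (fun n => (((hh n).stronglyMeasurable.integral_prod_right').comp_measurable
      hT).aestronglyMeasurable.const_mul _) (integrable_const K)
    (fun n => .of_forall fun ω => ?_) (.of_forall fun ω => hG (Tt i ω))
  rw [Real.norm_of_nonneg (mul_nonneg n.cast_nonneg (integral_nonneg fun x => (hh01 n _).1))]
  exact hhK n _

theorem tendsto_mul_integral_comp_mul_comp (hTj : Measurable (Tt j)) (hXj : Measurable (Xx j))
    (hXi : Measurable (Xx i)) (hTX : Q.map (fun ω => (Tt j ω, Xx j ω)) = (Q.map (Tt j)).prod ν)
    (hXX : Q.map (fun ω => (Xx j ω, Xx i ω)) = (Q.map (Xx j)).prod ν)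
    (hφm : ∀ n, Measurable (φ n)) (hh0 : ∀ n z, 0 ≤ h n z) (hhφ : ∀ n t x, h n (t, x) ≤ φ n x)
    (hφ : ∀ n x, φ n x ∈ Set.Icc 0 1) (hK : ∀ n : ℕ, n * ∫ x, φ n x ∂ν ≤ K) :
    Tendsto (fun n : ℕ => n * ∫ ω, h n (Tt j ω, Xx j ω) * h n (Tt i ω, Xx i ω) ∂Q) atTop
      (𝓝 0) := by
  set q : ℕ → ℝ := fun n => ∫ x, φ n x ∂ν
  have hq0 : ∀ n, 0 ≤ q n := fun n => integral_nonneg fun x => (hφ n x).1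
  have hq : Tendsto q atTop (𝓝 0) := tendsto_zero_of_mul_le hq0 hK
  have hXj_law := map_eq_smul_of_map_prodMk_eq_prod hTj hXj hTX
  have hφφ : ∀ n, Integrable (fun ω => φ n (Xx j ω) * φ n (Xx i ω)) Q := fun n =>
    .of_mem_Icc 0 1 (((hφm n).comp hXj).mul ((hφm n).comp hXi)).aemeasurable
      (.of_forall fun ω => ⟨mul_nonneg (hφ n _).1 (hφ n _).1,
        mul_le_one₀ (hφ n _).2 (hφ n _).1 (hφ n _).2⟩)
  have hle : ∀ n : ℕ, n * ∫ ω, h n (Tt j ω, Xx j ω) * h n (Tt i ω, Xx i ω) ∂Q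
      ≤ Q.real Set.univ * K * q n := fun n => calc
    _ ≤ n * ∫ ω, φ n (Xx j ω) * φ n (Xx i ω) ∂Q := by
      refine mul_le_mul_of_nonneg_left (integral_mono_of_nonneg
        (.of_forall fun ω => mul_nonneg (hh0 n _) (hh0 n _)) (hφφ n)
        (.of_forall fun ω => mul_le_mul (hhφ n _ _) (hhφ n _ _) (hh0 n _) (hφ n _).1))
        n.cast_nonneg
    _ = Q.real Set.univ * (n * q n) * q n := by
      rw [integral_comp_mul_comp_eq hXj hXi hXj_law hXX (hφm n) (hφ n)]
      ring
    _ ≤ Q.real Set.univ * K * q n := by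
      gcongr
      · exact hq0 n
      · exact hK n
  refine squeeze_zero (fun n => mul_nonneg n.cast_nonneg
    (integral_nonneg fun ω => mul_nonneg (hh0 n _) (hh0 n _))) hle ?_
  simpa using hq.const_mul (Q.real Set.univ * K)

theorem tendsto_mul_integral_one_sub_prod_one_sub (hT : ∀ i, Measurable (Tt i))
    (hX : ∀ i, Measurable (Xx i))
    (hTX : ∀ i, Q.map (fun ω => (Tt i ω, Xx i ω)) = (Q.map (Tt i)).prod ν)
    (hXX : ∀ i j, j ≠ i → Q.map (fun ω => (Xx j ω, Xx i ω)) = (Q.map (Xx j)).prod ν)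
    (hh : ∀ n, Measurable (h n)) (hφm : ∀ n, Measurable (φ n)) (hh0 : ∀ n z, 0 ≤ h n z)
    (hhφ : ∀ n t x, h n (t, x) ≤ φ n x) (hφ : ∀ n x, φ n x ∈ Set.Icc 0 1)
    (hK : ∀ n : ℕ, n * ∫ x, φ n x ∂ν ≤ K) {G : T → ℝ}
    (hG : ∀ t, Tendsto (fun n : ℕ => n * ∫ x, h n (t, x) ∂ν) atTop (𝓝 (G t))) (m : ℕ) :
    Tendsto (fun n : ℕ => n * ∫ ω, (1 - ∏ i ∈ range m, (1 - h n (Tt i ω, Xx i ω))) ∂Q) atTop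
      (𝓝 (∑ i ∈ range m, ∫ ω, G (Tt i ω) ∂Q)) := by
  have hh01 : ∀ n z, h n z ∈ Set.Icc 0 1 := fun n z => ⟨hh0 n z, (hhφ n _ _).trans (hφ n _).2⟩
  have hH : ∀ n i, Integrable (fun ω => h n (Tt i ω, Xx i ω)) Q := fun n i =>
    .of_mem_Icc 0 1 (by fun_prop) (.of_forall fun _ => hh01 n _)
  have hHH : ∀ n i j, Integrable (fun ω => h n (Tt j ω, Xx j ω) * h n (Tt i ω, Xx i ω)) Q :=
    fun n i j => (hH n i).bdd_mul (c := 1) (hH n j).aestronglyMeasurable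
      (.of_forall fun ω => by rw [Real.norm_of_nonneg (hh01 n _).1]; exact (hh01 n _).2)
  set S : ℕ → Ω → ℝ := fun n ω => ∑ i ∈ range m, h n (Tt i ω, Xx i ω)
  set E : ℕ → Ω → ℝ := fun n ω =>
    ∑ i ∈ range m, ∑ j ∈ range i, h n (Tt j ω, Xx j ω) * h n (Tt i ω, Xx i ω)
  have hS : ∀ n, Integrable (S n) Q := fun n => integrable_finsetSum _ fun i _ => hH n i
  have hE : ∀ n, Integrable (E n) Q := fun n =>
    integrable_finsetSum _ fun i _ => integrable_finsetSum _ fun j _ => hHH n i j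
  have hF : ∀ n, Integrable (fun ω => 1 - ∏ i ∈ range m, (1 - h n (Tt i ω, Xx i ω))) Q :=
    fun n => .of_mem_Icc 0 1 (by fun_prop)
      (.of_forall fun ω => one_sub_prod_one_sub_mem_Icc (fun i => hh01 n _) _)
  have hmain : Tendsto (fun n : ℕ => n * ∫ ω, S n ω ∂Q) atTop
      (𝓝 (∑ i ∈ range m, ∫ ω, G (Tt i ω) ∂Q)) := by
    simp_rw [S, integral_finsetSum _ fun i _ => hH _ i, mul_sum]
    exact tendsto_finsetSum _ fun i _ => tendsto_mul_integral_comp (hT i) (hX i) (hTX i) hh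
      hh01 (mul_integral_section_le hh hφm hh0 hhφ hφ hK) hG
  have herr : Tendsto (fun n : ℕ => n * ∫ ω, E n ω ∂Q) atTop (𝓝 0) := by
    simp_rw [E, integral_finsetSum _ fun i _ => integrable_finsetSum _ fun j _ => hHH _ i j,
      integral_finsetSum _ fun j _ => hHH _ _ j, mul_sum]
    simpa using tendsto_finsetSum _ fun i _ => tendsto_finsetSum _ fun j hj =>
      tendsto_mul_integral_comp_mul_comp (hT j) (hX j) (hX i) (hTX j)
        (hXX i j (mem_range.1 hj).ne) hφm hh0 hhφ hφ hK
  refine tendsto_of_tendsto_of_tendsto_of_le_of_le (by simpa using hmain.sub herr) hmain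
    (fun n => ?_) fun n => mul_le_mul_of_nonneg_left (integral_mono (hF n) (hS n) fun ω =>
      one_sub_prod_one_sub_le_sum (fun i => (hh01 n _).1) (fun i => (hh01 n _).2) m) n.cast_nonneg
  rw [← mul_sub, ← integral_sub (hS n) (hE n)]
  exact mul_le_mul_of_nonneg_left (integral_mono ((hS n).sub (hE n)) (hF n) fun ω =>
    sum_sub_sum_mul_le_one_sub_prod_one_sub (fun i => (hh01 n _).1) (fun i => (hh01 n _).2) m)
    n.cast_nonneg

theorem norm_mul_integral_one_sub_prod_one_sub_le (hT : ∀ i, Measurable (Tt i))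
    (hX : ∀ i, Measurable (Xx i))
    (hTX : ∀ i, Q.map (fun ω => (Tt i ω, Xx i ω)) = (Q.map (Tt i)).prod ν)
    (hh : ∀ n, Measurable (h n)) (hh01 : ∀ n z, h n z ∈ Set.Icc 0 1)
    (hhK : ∀ (n : ℕ) t, n * ∫ x, h n (t, x) ∂ν ≤ K) (n m : ℕ) :
    ‖n * ∫ ω, (1 - ∏ i ∈ range m, (1 - h n (Tt i ω, Xx i ω))) ∂Q‖
      ≤ m * (K * Q.real Set.univ) := by
  have hH : ∀ i, Integrable (fun ω => h n (Tt i ω, Xx i ω)) Q := fun i =>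
    .of_mem_Icc 0 1 (by fun_prop) (.of_forall fun _ => hh01 n _)
  have hF01 := fun ω => one_sub_prod_one_sub_mem_Icc (fun i => hh01 n (Tt i ω, Xx i ω)) (range m)
  rw [Real.norm_of_nonneg (mul_nonneg n.cast_nonneg (integral_nonneg fun ω => (hF01 ω).1))]
  calc _ ≤ n * ∫ ω, ∑ i ∈ range m, h n (Tt i ω, Xx i ω) ∂Q :=
        mul_le_mul_of_nonneg_left (integral_mono_of_nonneg (.of_forall fun ω => (hF01 ω).1)
          (integrable_finsetSum _ fun i _ => hH i) (.of_forall fun ω =>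
            one_sub_prod_one_sub_le_sum (fun i => (hh01 n _).1) (fun i => (hh01 n _).2) m))
          n.cast_nonneg
    _ = ∑ i ∈ range m, ∫ ω, n * ∫ x, h n (Tt i ω, x) ∂ν ∂Q := by
        rw [integral_finsetSum _ fun i _ => hH i, mul_sum]
        exact sum_congr rfl fun i _ => mul_integral_comp_eq (hT i) (hX i) (hTX i) (hh n) (hh01 n)
    _ ≤ ∑ i ∈ range m, ∫ _, K ∂Q := sum_le_sum fun i _ => integral_mono_of_nonneg
        (.of_forall fun ω => mul_nonneg n.cast_nonneg (integral_nonneg fun x => (hh01 n _).1))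
        (integrable_const K) (.of_forall fun ω => hhK n _)
    _ = m * (K * Q.real Set.univ) := by simp [mul_comm]

end FixedNumberOfPoints

section IndependentMarks

variable {Ω T X : Type*} [MeasurableSpace Ω] [MeasurableSpace T] [MeasurableSpace X]
  {P : Measure Ω} {N : Ω → ℕ} {Tt : ℕ → Ω → T} {Xx : ℕ → Ω → X}

def IsIndependentlyMarked (P : Measure Ω) (N : Ω → ℕ) (Tt : ℕ → Ω → T) (Xx : ℕ → Ω → X) :
    Prop :=
  ∀ (j n : ℕ) (A : ℕ → Set T) (B : ℕ → Set X),
    (∀ i, MeasurableSet (A i)) → (∀ i, MeasurableSet (B i)) →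
    P (({ω | N ω = j} ∩ ⋂ i ∈ Finset.range n, {ω | Tt i ω ∈ A i}) ∩
        ⋂ i ∈ Finset.range n, {ω | Xx i ω ∈ B i})
      = P ({ω | N ω = j} ∩ ⋂ i ∈ Finset.range n, {ω | Tt i ω ∈ A i}) *
        ∏ i ∈ Finset.range n, P {ω | Xx i ω ∈ B i}

theorem biInter_preimage_ite_univ {α ι β : Type*} {s t : Finset ι} [DecidablePred (· ∈ s)]
    (hst : s ⊆ t) (f : ι → α → β) (S : ι → Set β) :
    ⋂ i ∈ t, {a | f i a ∈ if i ∈ s then S i else Set.univ} = ⋂ i ∈ s, f i ⁻¹' S i := by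
  ext a
  simp only [Set.mem_iInter, Set.mem_ofPred_eq, Set.mem_ite_univ_right, Set.mem_preimage]
  exact ⟨fun h i hi => h i (hst hi) hi, fun h i _ hi => h i hi⟩

theorem IsIndependentlyMarked.measure_inter [IsProbabilityMeasure P]
    (hI : IsIndependentlyMarked P N Tt Xx) (j : ℕ) (s : Finset ℕ) {A : ℕ → Set T}
    {B : ℕ → Set X} (hA : ∀ i, MeasurableSet (A i)) (hB : ∀ i, MeasurableSet (B i)) :
    P (({ω | N ω = j} ∩ ⋂ i ∈ s, Tt i ⁻¹' A i) ∩ ⋂ i ∈ s, Xx i ⁻¹' B i)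
      = P ({ω | N ω = j} ∩ ⋂ i ∈ s, Tt i ⁻¹' A i) * ∏ i ∈ s, P (Xx i ⁻¹' B i) := by
  classical
  obtain ⟨n, hn⟩ := s.exists_nat_subset_range
  have key := hI j n (fun i => if i ∈ s then A i else Set.univ)
    (fun i => if i ∈ s then B i else Set.univ) (fun i => by split_ifs <;> simp [hA i])
    (fun i => by split_ifs <;> simp [hB i])
  rw [biInter_preimage_ite_univ hn, biInter_preimage_ite_univ hn] at key
  rw [key, ← prod_subset hn fun i _ hi => by simp [hi]]
  exact congrArg _ (prod_congr rfl fun i hi => by simp [hi, Set.preimage])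

variable [IsProbabilityMeasure P] {ν : Measure X} [IsFiniteMeasure ν]

theorem IsIndependentlyMarked.map_restrict_mark (hI : IsIndependentlyMarked P N Tt Xx)
    (hT : ∀ i, Measurable (Tt i)) (hX : ∀ i, Measurable (Xx i)) (hXlaw : ∀ i, P.map (Xx i) = ν)
    (m i : ℕ) :
    (P.restrict {ω | N ω = m}).map (fun ω => (Tt i ω, Xx i ω))
      = ((P.restrict {ω | N ω = m}).map (Tt i)).prod ν := by
  refine map_prodMk_eq_prod_of_measure_inter (hT i) (hX i) fun A B hA hB => ?_
  have key := hI.measure_inter m {i} (A := fun _ => A) (B := fun _ => B)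
    (fun _ => hA) (fun _ => hB)
  simp only [Set.iInter_iInter_eq_left, Finset.mem_singleton, Finset.prod_singleton] at key
  rw [Measure.restrict_apply ((hT i hA).inter (hX i hB)), Measure.restrict_apply (hT i hA),
    ← hXlaw i, Measure.map_apply (hX i) hB, Set.inter_comm, ← Set.inter_assoc, key,
    Set.inter_comm]

theorem IsIndependentlyMarked.map_restrict_point_point (hI : IsIndependentlyMarked P N Tt Xx)
    (hX : ∀ i, Measurable (Xx i)) (hXlaw : ∀ i, P.map (Xx i) = ν) (m : ℕ) {i j : ℕ}
    (hji : j ≠ i) :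
    (P.restrict {ω | N ω = m}).map (fun ω => (Xx j ω, Xx i ω))
      = ((P.restrict {ω | N ω = m}).map (Xx j)).prod ν := by
  refine map_prodMk_eq_prod_of_measure_inter (hX j) (hX i) fun A B hA hB => ?_
  have hAB : ∀ k, MeasurableSet (if k = j then A else B) := fun k => by split_ifs <;> assumption
  have key := hI.measure_inter m {j, i} (A := fun _ => Set.univ) (fun _ => .univ) hAB
  have keyj := hI.measure_inter m {j} (A := fun _ => Set.univ) (B := fun _ => A)
    (fun _ => .univ) fun _ => hA
  simp only [Set.preimage_univ, Set.iInter_univ, Set.inter_univ, Set.iInter_iInter_eq_left,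
    Finset.mem_singleton, Finset.prod_singleton, Finset.mem_insert] at key keyj
  rw [Set.iInter_iInter_eq_or_left, prod_pair hji] at key
  simp only [if_pos, if_neg hji.symm, Set.iInter_iInter_eq_left] at key
  rw [Measure.restrict_apply ((hX j hA).inter (hX i hB)), Measure.restrict_apply (hX j hA),
    ← hXlaw i, Measure.map_apply (hX i) hB, Set.inter_comm, key, Set.inter_comm, keyj, mul_assoc]

end IndependentMarks

section Fibres

variable {Ω : Type*} [MeasurableSpace Ω] {P : Measure Ω} {N : Ω → ℕ}

theorem measurable_apply_index {β : Type*} [MeasurableSpace β] {F : ℕ → Ω → β}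
    (hF : ∀ m, Measurable (F m)) (hN : Measurable N) : Measurable fun ω => F (N ω) ω :=
  (measurable_from_prod_countable_left (f := fun p : Ω × ℕ => F p.2 p.1) hF).comp
    (measurable_id.prodMk hN)

theorem hasSum_setIntegral_fiber (hN : Measurable N) {F : ℕ → Ω → ℝ}
    (hF : Integrable (fun ω => F (N ω) ω) P) :
    HasSum (fun m => ∫ ω in {ω | N ω = m}, F m ω ∂P) (∫ ω, F (N ω) ω ∂P) := by
  have hfib : ∀ m, MeasurableSet {ω | N ω = m} := fun m => hN (measurableSet_singleton m)
  have hU : ⋃ m, {ω | N ω = m} = Set.univ := Set.iUnion_eq_univ_iff.2 fun ω => ⟨N ω, rfl⟩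
  have hsum := hasSum_integral_iUnion hfib
    (fun i j hij => Set.disjoint_left.2 fun ω hi hj => hij (hi.symm.trans hj))
    (by rw [hU]; exact hF.integrableOn)
  rw [hU, Measure.restrict_univ] at hsum
  refine hsum.congr_fun fun m => setIntegral_congr_fun (hfib m) fun ω hω => ?_
  rw [show N ω = m from hω]

theorem tendsto_integral_of_tendsto_setIntegral_fiber (hN : Measurable N)
    {F : ℕ → ℕ → Ω → ℝ} {L : ℕ → Ω → ℝ} {b : ℕ → ℝ}
    (hF : ∀ n, Integrable (fun ω => F n (N ω) ω) P) (hL : Integrable (fun ω => L (N ω) ω) P)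
    (hb : Summable b) (hFb : ∀ n m, ‖∫ ω in {ω | N ω = m}, F n m ω ∂P‖ ≤ b m)
    (hlim : ∀ m, Tendsto (fun n => ∫ ω in {ω | N ω = m}, F n m ω ∂P) atTop
      (𝓝 (∫ ω in {ω | N ω = m}, L m ω ∂P))) :
    Tendsto (fun n => ∫ ω, F n (N ω) ω ∂P) atTop (𝓝 (∫ ω, L (N ω) ω ∂P)) := by
  rw [← (hasSum_setIntegral_fiber hN hL).tsum_eq]
  exact (tendsto_tsum_of_dominated_convergence hb hlim (.of_forall hFb)).congr
    fun n => (hasSum_setIntegral_fiber hN (hF n)).tsum_eq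

end Fibres

section MarkedCount

variable {Ω T X : Type*} [MeasurableSpace Ω] [MeasurableSpace T] [MeasurableSpace X]
  {P : Measure Ω} [IsProbabilityMeasure P] {ν : Measure X} [IsFiniteMeasure ν]
  {N : Ω → ℕ} {Tt : ℕ → Ω → T} {Xx : ℕ → Ω → X} {h : ℕ → T × X → ℝ} {φ : ℕ → X → ℝ}
  {G : T → ℝ} {K : ℝ}

theorem IsIndependentlyMarked.tendsto_mul_integral_one_sub_prod_one_sub
    (hI : IsIndependentlyMarked P N Tt Xx) (hN : Measurable N)
    (hNint : Integrable (fun ω => (N ω : ℝ)) P) (hT : ∀ i, Measurable (Tt i))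
    (hX : ∀ i, Measurable (Xx i)) (hXlaw : ∀ i, P.map (Xx i) = ν)
    (hh : ∀ n, Measurable (h n)) (hφm : ∀ n, Measurable (φ n)) (hh0 : ∀ n z, 0 ≤ h n z)
    (hhφ : ∀ n t x, h n (t, x) ≤ φ n x) (hφ : ∀ n x, φ n x ∈ Set.Icc 0 1)
    (hK : ∀ n : ℕ, n * ∫ x, φ n x ∂ν ≤ K)
    (hG : ∀ t, Tendsto (fun n : ℕ => n * ∫ x, h n (t, x) ∂ν) atTop (𝓝 (G t))) :
    Tendsto (fun n : ℕ => n * ∫ ω, (1 - ∏ i ∈ range (N ω), (1 - h n (Tt i ω, Xx i ω))) ∂P)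
      atTop (𝓝 (∫ ω, ∑ i ∈ range (N ω), G (Tt i ω) ∂P)) := by
  have hh01 : ∀ n z, h n z ∈ Set.Icc 0 1 := fun n z => ⟨hh0 n z, (hhφ n _ _).trans (hφ n _).2⟩
  have hhK := mul_integral_section_le hh hφm hh0 hhφ hφ hK
  have hGm : Measurable G := measurable_of_tendsto_metrizable
    (fun n => measurable_const.mul (hh n).stronglyMeasurable.integral_prod_right'.measurable)
    (tendsto_pi_nhds.2 hG)
  have hG0K : ∀ t, G t ∈ Set.Icc 0 K := fun t =>
    ⟨ge_of_tendsto' (hG t) fun n =>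
        mul_nonneg n.cast_nonneg (integral_nonneg fun x => (hh01 n _).1),
      le_of_tendsto' (hG t) fun n => hhK n t⟩
  have hNsum : HasSum (fun m : ℕ => m * P.real {ω | N ω = m}) (∫ ω, (N ω : ℝ) ∂P) := by
    simpa [setIntegral_const, mul_comm] using
      hasSum_setIntegral_fiber (F := fun m _ => (m : ℝ)) hN hNint
  simp_rw [← integral_const_mul]
  refine tendsto_integral_of_tendsto_setIntegral_fiber hN
    (F := fun n m ω => n * (1 - ∏ i ∈ range m, (1 - h n (Tt i ω, Xx i ω))))
    (L := fun m ω => ∑ i ∈ range m, G (Tt i ω)) (fun n => ?_) ?_ (hNsum.summable.mul_left K)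
    (fun n m => ?_) fun m => ?_
  · refine (Integrable.of_mem_Icc 0 1 (measurable_apply_index
      (F := fun m ω => 1 - ∏ i ∈ range m, (1 - h n (Tt i ω, Xx i ω))) (fun m => by fun_prop)
      hN).aemeasurable (.of_forall fun ω => ?_)).const_mul _
    exact one_sub_prod_one_sub_mem_Icc (fun i => hh01 n _) _
  · refine (hNint.const_mul K).mono' (measurable_apply_index
      (F := fun m ω => ∑ i ∈ range m, G (Tt i ω)) (fun m => by fun_prop) hN).aestronglyMeasurable
      (.of_forall fun ω => ?_)
    rw [Real.norm_of_nonneg (sum_nonneg fun i _ => (hG0K _).1), mul_comm]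
    simpa using sum_le_sum fun i (_ : i ∈ range (N ω)) => (hG0K (Tt i ω)).2
  · rw [integral_const_mul]
    refine (norm_mul_integral_one_sub_prod_one_sub_le hT hX
      (hI.map_restrict_mark hT hX hXlaw m) hh hh01 hhK n m).trans_eq ?_
    rw [Measure.real, Measure.restrict_apply_univ, Measure.real]
    ring
  · simp_rw [integral_const_mul]
    rw [integral_finsetSum (f := fun i ω => G (Tt i ω)) _ fun i _ =>
      .of_mem_Icc 0 K (hGm.comp (hT i)).aemeasurable (.of_forall fun ω => hG0K _)]
    exact _root_.tendsto_mul_integral_one_sub_prod_one_sub hT hX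
      (hI.map_restrict_mark hT hX hXlaw m)
      (fun i j hji => hI.map_restrict_point_point hX hXlaw m hji) hh hφm hh0 hhφ hφ hK hG m

end MarkedCount

theorem exists_continuous_cutoff {X : Type*} [MetricSpace X] (x0 : X) {r : ℝ} (hr : 0 < r) :
    ∃ ψ : X → ℝ, Continuous ψ ∧ (∀ x, ψ x ∈ Set.Icc 0 1) ∧
      (∀ x, dist x0 x < r / 2 → ψ x = 0) ∧ ∀ x, r ≤ dist x0 x → ψ x = 1 := by
  obtain ⟨ψ, hψ0, hψ1, hψ⟩ := exists_continuous_zero_one_of_isClosed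
    (isClosed_closedBall (x := x0) (ε := r / 2))
    (isClosed_le continuous_const (continuous_const.dist continuous_id) :
      IsClosed {x | r ≤ dist x0 x})
    (Set.disjoint_left.2 fun x hx (hx' : r ≤ dist x0 x) => by
      rw [mem_closedBall, dist_comm] at hx
      linarith)
  exact ⟨ψ, ψ.continuous, hψ, fun x hx => hψ0 (mem_closedBall.2 (by rw [dist_comm]; linarith)),
    fun x hx => hψ1 hx⟩

theorem stmt_13_general
    {T : Type*} [MetricSpace T]
    [MeasurableSpace T] [BorelSpace T]
    {X : Type*} [MetricSpace X] [TopologicalSpace.SeparableSpace X]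
    [MeasurableSpace X] [BorelSpace X]
    (x0 : X) (σ : ℝ → X → X)
    (hσc : ContinuousOn (fun p : ℝ × X => σ p.1 p.2) (Set.Ioi (0 : ℝ) ×ˢ Set.univ))
    (ν : Measure X) [IsProbabilityMeasure ν]
    (a : ℕ → ℝ) (ha : ∀ n, 0 < a n)
    (μ : Measure X)
    (hRV : ∀ h : X → ℝ, Continuous h → (∃ C, ∀ x, |h x| ≤ C) →
      (∃ ρ > (0 : ℝ), ∀ x, dist x0 x < ρ → h x = 0) →
      Tendsto (fun n : ℕ => (n : ℝ) * ∫ x, h (σ (a n)⁻¹ x) ∂ν) atTop (𝓝 (∫ x, h x ∂μ)))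
    {Ω : Type*} [MeasurableSpace Ω] (P : Measure Ω) [IsProbabilityMeasure P]
    (N : Ω → ℕ) (hNmeas : Measurable N)
    (hNint : Integrable (fun ω => (N ω : ℝ)) P)
    (Tt : ℕ → Ω → T) (hTmeas : ∀ i, Measurable (Tt i))
    (Xx : ℕ → Ω → X) (hXmeas : ∀ i, Measurable (Xx i))
    (hXlaw : ∀ i, Measure.map (Xx i) P = ν)
    (hIndep : ∀ (j n : ℕ) (A : ℕ → Set T) (B : ℕ → Set X),
      (∀ i, MeasurableSet (A i)) → (∀ i, MeasurableSet (B i)) →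
      P (({ω | N ω = j} ∩ ⋂ i ∈ Finset.range n, {ω | Tt i ω ∈ A i}) ∩
          ⋂ i ∈ Finset.range n, {ω | Xx i ω ∈ B i})
        = P ({ω | N ω = j} ∩ ⋂ i ∈ Finset.range n, {ω | Tt i ω ∈ A i}) *
          ∏ i ∈ Finset.range n, P {ω | Xx i ω ∈ B i})
    (f : T × X → ℝ) (hfc : Continuous f) (hf0 : ∀ z, 0 ≤ f z)
    (r : ℝ) (hr : 0 < r) (hfvan : ∀ t x, dist x0 x < r → f (t, x) = 0) :
    Tendsto (fun n : ℕ => (n : ℝ) *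
        ∫ ω, (1 - Real.exp (-∑ i ∈ Finset.range (N ω), f (Tt i ω, σ (a n)⁻¹ (Xx i ω)))) ∂P)
      atTop
      (𝓝 (∫ ω, ∑ i ∈ Finset.range (N ω), ∫ x, (1 - Real.exp (-f (Tt i ω, x))) ∂μ ∂P)) := by
  have hσ : ∀ n, Measurable (σ (a n)⁻¹) := fun n =>
    (hσc.comp_continuous (continuous_const.prodMk continuous_id)
      fun _ => ⟨inv_pos.2 (ha n), trivial⟩).measurable
  obtain ⟨ψ, hψc, hψ, hψ0, hψ1⟩ := exists_continuous_cutoff x0 hr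
  set g : T × X → ℝ := fun z => 1 - Real.exp (-f z)
  have hg : ∀ z, g z ∈ Set.Icc 0 1 := fun z =>
    ⟨sub_nonneg.2 (Real.exp_le_one_iff.2 (neg_nonpos.2 (hf0 z))), sub_le_self _ (Real.exp_pos _).le⟩
  have hgψ : ∀ t x, g (t, x) ≤ ψ x := fun t x => by
    rcases lt_or_ge (dist x0 x) r with hx | hx
    · simpa [g, hfvan t x hx] using (hψ x).1
    · exact hψ1 x hx ▸ (hg _).2
  have hbdd : ∀ u : X → ℝ, (∀ x, u x ∈ Set.Icc 0 1) → ∃ C, ∀ x, |u x| ≤ C := fun u hu =>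
    ⟨1, fun x => abs_le.2 ⟨by linarith [(hu x).1], (hu x).2⟩⟩
  obtain ⟨K, hK⟩ := (hRV ψ hψc (hbdd ψ hψ) ⟨r / 2, half_pos hr, hψ0⟩).bddAbove_range
  have hI : IsIndependentlyMarked P N Tt Xx := hIndep
  have key := hI.tendsto_mul_integral_one_sub_prod_one_sub
    (h := fun n z => g (z.1, σ (a n)⁻¹ z.2)) (φ := fun n x => ψ (σ (a n)⁻¹ x))
    (G := fun t => ∫ x, g (t, x) ∂μ) hNmeas hNint hTmeas hXmeas hXlaw (fun n => by fun_prop)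
    (fun n => hψc.measurable.comp (hσ n)) (fun n z => (hg _).1) (fun n t x => hgψ _ _)
    (fun n x => hψ _) (fun n => hK ⟨n, rfl⟩) fun t => hRV _ (by fun_prop) (hbdd _ fun x => hg _)
      ⟨r, hr, fun x hx => by simp [g, hfvan t x hx]⟩
  convert key using 4 with n ω
  simp [g, ← Real.exp_sum]

/-- Regular variation of independently marked point processes, Laplace-functional
form, case `k = 0` (Theorem 3.2 of the paper). -/
theorem stmt_13
    {T : Type*} [MetricSpace T] [CompleteSpace T] [TopologicalSpace.SeparableSpace T]
    [MeasurableSpace T] [BorelSpace T]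
    {X : Type*} [MetricSpace X] [CompleteSpace X] [TopologicalSpace.SeparableSpace X]
    [MeasurableSpace X] [BorelSpace X]
    (x0 : X) (σ : ℝ → X → X)
    (hσc : ContinuousOn (fun p : ℝ × X => σ p.1 p.2) (Set.Ioi (0 : ℝ) ×ˢ Set.univ))
    (hσ1 : ∀ x, σ 1 x = x)
    (hσm : ∀ u v : ℝ, 0 < u → 0 < v → ∀ x, σ u (σ v x) = σ (u * v) x)
    (hσ0 : ∀ u : ℝ, 0 < u → σ u x0 = x0)
    (ν : Measure X) [IsProbabilityMeasure ν] (hν0 : ν {x0} = 0)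
    (a : ℕ → ℝ) (ha : ∀ n, 0 < a n) (haTop : Tendsto a atTop atTop)
    (μ : Measure X) (hμ0 : μ ≠ 0)
    (hμFin : ∀ ρ > (0 : ℝ), μ {x | ρ ≤ dist x0 x} ≠ ⊤)
    (hRV : ∀ h : X → ℝ, Continuous h → (∃ C, ∀ x, |h x| ≤ C) →
      (∃ ρ > (0 : ℝ), ∀ x, dist x0 x < ρ → h x = 0) →
      Tendsto (fun n : ℕ => (n : ℝ) * ∫ x, h (σ (a n)⁻¹ x) ∂ν) atTop (𝓝 (∫ x, h x ∂μ)))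
    {Ω : Type*} [MeasurableSpace Ω] (P : Measure Ω) [IsProbabilityMeasure P]
    (N : Ω → ℕ) (hNmeas : Measurable N)
    (hNint : Integrable (fun ω => (N ω : ℝ)) P) (hNpos : 0 < ∫ ω, (N ω : ℝ) ∂P)
    (Tt : ℕ → Ω → T) (hTmeas : ∀ i, Measurable (Tt i))
    (Xx : ℕ → Ω → X) (hXmeas : ∀ i, Measurable (Xx i))
    (hXlaw : ∀ i, Measure.map (Xx i) P = ν)
    (hIndep : ∀ (j n : ℕ) (A : ℕ → Set T) (B : ℕ → Set X),
      (∀ i, MeasurableSet (A i)) → (∀ i, MeasurableSet (B i)) →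
      P (({ω | N ω = j} ∩ ⋂ i ∈ Finset.range n, {ω | Tt i ω ∈ A i}) ∩
          ⋂ i ∈ Finset.range n, {ω | Xx i ω ∈ B i})
        = P ({ω | N ω = j} ∩ ⋂ i ∈ Finset.range n, {ω | Tt i ω ∈ A i}) *
          ∏ i ∈ Finset.range n, P {ω | Xx i ω ∈ B i})
    (f : T × X → ℝ) (hfc : Continuous f) (hf0 : ∀ z, 0 ≤ f z) (hfb : ∃ C, ∀ z, f z ≤ C)
    (r : ℝ) (hr : 0 < r) (hfvan : ∀ t x, dist x0 x < r → f (t, x) = 0) :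
    Tendsto (fun n : ℕ => (n : ℝ) *
        ∫ ω, (1 - Real.exp (-∑ i ∈ Finset.range (N ω), f (Tt i ω, σ (a n)⁻¹ (Xx i ω)))) ∂P)
      atTop
      (𝓝 (∫ ω, ∑ i ∈ Finset.range (N ω), ∫ x, (1 - Real.exp (-f (Tt i ω, x))) ∂μ ∂P)) :=
  stmt_13_general x0 σ hσc ν a ha μ hRV P N hNmeas hNint Tt hTmeas Xx hXmeas hXlaw hIndep f hfc hf0
    r hr hfvan
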